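/- Let β ∈ [0, 1] and 0 < c < 1, and assume that for all ε > 0 the learning tuple satisfies the (ε^{1−β}, c)-central condition up to ε: log E_{P_W ⊗ μ}[exp(−ε^{1−β} r(W', Z'))] ≤ −c ε^{1−β} E_{P_W ⊗ μ}[r(W', Z')] + ε^{1−β} ε. If I(W; Zᵢ) > 0 for each i, then E[ℰ(W, Sₙ)] ≤ ((1 − c)/c) · E[ℛ̂(W, Sₙ)] + (2/(n c)) Σ_{i=1}^n I(W; Zᵢ)^{1/(2−β)}. -/

import Mathlib

open MeasureTheory ProbabilityTheory

/-- Real-valued Kullback–Leibler divergence `D(P‖Q) = ∫ log (dP/dQ) dP`. -/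
noncomputable def klDivR {α : Type*} [MeasurableSpace α] (P Q : Measure α) : ℝ :=
  ∫ x, llr P Q x ∂P

/-!
For each sample `i`, the Donsker–Varadhan inequality for `-η r` under the joint law of `(W, Zᵢ)`
against `P_W ⊗ μ`, combined with the central condition, gives
`c E_{P_W ⊗ μ}[r] ≤ E[r(W, Zᵢ)] + I(W; Zᵢ) / η + ε`.
With `ε = I(W; Zᵢ)^{1/(2-β)}` and `η = ε^{1-β}` the information term equals `ε` as well.
Averaging over `i` and using `E[ℰ(W, Sₙ)] = E_{P_W ⊗ μ}[r] - E[ℛ̂(W, Sₙ)]` gives the bound.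

The integrability needed along the way also comes from Donsker–Varadhan: it bounds the
truncations of the negative part of `r(W, Zᵢ)` by the exponential moment of `-r` under
`P_W ⊗ μ`, which together with the integrability of `ℛ̂` makes each `r(W, Zᵢ)` integrable;
independence of the `Zᵢ` then makes `ℓ(w*, ·)` integrable.
-/

section KullbackLeibler

variable {α : Type*} [MeasurableSpace α] {P Q : Measure α}
  [IsProbabilityMeasure P] [IsProbabilityMeasure Q]

lemma klDivR_nonneg (hPQ : P ≪ Q) (hllr : Integrable (llr P Q) P) : 0 ≤ klDivR P Q := by
  simpa [klDivR] using InformationTheory.integral_llr_add_sub_measure_univ_nonneg hPQ hllr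

/-- The Donsker–Varadhan inequality. -/
lemma integral_le_klDivR_add_log_integral_exp (hPQ : P ≪ Q) (hllr : Integrable (llr P Q) P)
    {f : α → ℝ} (hfP : Integrable f P) (hfQ : Integrable (fun x => Real.exp (f x)) Q) :
    ∫ x, f x ∂P ≤ klDivR P Q + Real.log (∫ x, Real.exp (f x) ∂Q) := by
  have : IsProbabilityMeasure (Q.tilted f) := isProbabilityMeasure_tilted hfQ
  have hKL := klDivR_nonneg (hPQ.trans (absolutelyContinuous_tilted hfQ))
    (integrable_llr_tilted_right hPQ hfP hllr hfQ)
  rw [klDivR, integral_llr_tilted_right hPQ hfP hfQ hllr] at hKL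
  rw [klDivR]
  linarith

lemma integrable_min_natCast_of_nonneg {μ : Measure α} [IsFiniteMeasure μ] {h : α → ℝ}
    (hmeas : Measurable h) (hnonneg : 0 ≤ h) (m : ℕ) : Integrable (fun x => min (h x) m) μ :=
  .of_bound (hmeas.min measurable_const).aestronglyMeasurable m
    (Filter.Eventually.of_forall fun x => by
      rw [Real.norm_of_nonneg (le_min (hnonneg x) m.cast_nonneg)]
      exact min_le_right _ _)

lemma integrable_of_integral_min_le {μ : Measure α} [IsFiniteMeasure μ] {h : α → ℝ}
    (hmeas : Measurable h) (hnonneg : 0 ≤ h) {C : ℝ}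
    (hC : ∀ m : ℕ, ∫ x, min (h x) m ∂μ ≤ C) : Integrable h μ := by
  refine ⟨hmeas.aestronglyMeasurable, ?_⟩
  rw [hasFiniteIntegral_iff_ofReal (Filter.Eventually.of_forall hnonneg)]
  have hsup (x : α) : ENNReal.ofReal (h x) = ⨆ m : ℕ, ENNReal.ofReal (min (h x) m) :=
    le_antisymm (le_iSup_of_le ⌈h x⌉₊ (by rw [min_eq_left (Nat.le_ceil _)]))
      (iSup_le fun m => ENNReal.ofReal_le_ofReal (min_le_left _ _))
  calc ∫⁻ x, ENNReal.ofReal (h x) ∂μ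
      = ⨆ m : ℕ, ∫⁻ x, ENNReal.ofReal (min (h x) m) ∂μ := by
        simp_rw [hsup]
        exact lintegral_iSup (fun m => (hmeas.min measurable_const).ennreal_ofReal)
          fun i j hij x => ENNReal.ofReal_le_ofReal (min_le_min_left _ (Nat.cast_le.mpr hij))
    _ ≤ ENNReal.ofReal C := iSup_le fun m => by
        rw [← ofReal_integral_eq_lintegral_ofReal (integrable_min_natCast_of_nonneg hmeas hnonneg m)
          (Filter.Eventually.of_forall fun x => le_min (hnonneg x) m.cast_nonneg)]
        exact ENNReal.ofReal_le_ofReal (hC m)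
    _ < ⊤ := ENNReal.ofReal_lt_top

lemma integrable_of_integrable_exp (hPQ : P ≪ Q) (hllr : Integrable (llr P Q) P) {h : α → ℝ}
    (hmeas : Measurable h) (hnonneg : 0 ≤ h) (hexp : Integrable (fun x => Real.exp (h x)) Q) :
    Integrable h P := by
  refine integrable_of_integral_min_le hmeas hnonneg
    (C := klDivR P Q + Real.log (∫ x, Real.exp (h x) ∂Q)) fun m => ?_
  have hmin : Measurable fun x => min (h x) m := hmeas.min measurable_const
  have hexp_min : Integrable (fun x => Real.exp (min (h x) m)) Q :=
    hexp.mono' hmin.exp.aestronglyMeasurable (Filter.Eventually.of_forall fun x => by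
      rw [Real.norm_of_nonneg (Real.exp_pos _).le]
      exact Real.exp_le_exp.mpr (min_le_left _ _))
  calc ∫ x, min (h x) m ∂P
      ≤ klDivR P Q + Real.log (∫ x, Real.exp (min (h x) m) ∂Q) :=
        integral_le_klDivR_add_log_integral_exp hPQ hllr
          (integrable_min_natCast_of_nonneg hmeas hnonneg m) hexp_min
    _ ≤ klDivR P Q + Real.log (∫ x, Real.exp (h x) ∂Q) :=
        add_le_add_right (Real.log_le_log (integral_exp_pos hexp_min)
          (integral_mono hexp_min hexp fun x => Real.exp_le_exp.mpr (min_le_left _ _))) _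

lemma integrable_negPart_of_integrable_exp_neg (hPQ : P ≪ Q) (hllr : Integrable (llr P Q) P)
    {f : α → ℝ} (hf : Measurable f) (hexp : Integrable (fun x => Real.exp (-f x)) Q) :
    Integrable (fun x => max (-f x) 0) P := by
  have hneg : Measurable fun x => max (-f x) 0 := hf.neg.max measurable_const
  refine integrable_of_integrable_exp hPQ hllr hneg (fun x => le_max_right _ _) ?_
  refine (hexp.add (integrable_const 1)).mono' hneg.exp.aestronglyMeasurable
    (Filter.Eventually.of_forall fun x => ?_)
  rw [Real.norm_of_nonneg (Real.exp_pos _).le, Real.exp_monotone.map_max, Real.exp_zero]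
  exact max_le (le_add_of_nonneg_right zero_le_one) (le_add_of_nonneg_left (Real.exp_pos _).le)

end KullbackLeibler

section Integrability

variable {Ω : Type*} [MeasurableSpace Ω]

lemma abs_le_abs_sum_add_two_mul_sum_negPart {ι : Type*} [Fintype ι] (a : ι → ℝ) (i : ι) :
    |a i| ≤ |∑ j, a j| + 2 * ∑ j, max (-a j) 0 := by
  have hpos : max (a i) 0 ≤ ∑ j, max (a j) 0 :=
    Finset.single_le_sum (fun j _ => le_max_right _ _) (Finset.mem_univ i)
  have hneg : max (-a i) 0 ≤ ∑ j, max (-a j) 0 :=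
    Finset.single_le_sum (fun j _ => le_max_right (-a j) 0) (Finset.mem_univ i)
  have hsplit : ∑ j, max (a j) 0 = ∑ j, a j + ∑ j, max (-a j) 0 := by
    rw [← Finset.sum_add_distrib]
    exact Finset.sum_congr rfl fun j _ => by
      rcases le_total (a j) 0 with h | h <;> simp [h]
  have habs : |a i| ≤ max (a i) 0 + max (-a i) 0 := by
    rcases le_total (a i) 0 with h | h <;> simp [h, abs_of_nonpos, abs_of_nonneg]
  linarith [le_abs_self (∑ j, a j)]

lemma integrable_of_integrable_sum_of_integrable_negPart {ι : Type*} [Fintype ι]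
    {μ : Measure Ω} {f : ι → Ω → ℝ} (hf : ∀ i, AEStronglyMeasurable (f i) μ)
    (hsum : Integrable (fun ω => ∑ i, f i ω) μ)
    (hneg : ∀ i, Integrable (fun ω => max (-f i ω) 0) μ) (i : ι) :
    Integrable (f i) μ :=
  (hsum.abs.add ((integrable_finsetSum _ fun j _ => hneg j).const_mul 2)).mono' (hf i)
    (Filter.Eventually.of_forall fun ω =>
      abs_le_abs_sum_add_two_mul_sum_negPart (fun j => f j ω) i)

variable {P : Measure Ω} [IsProbabilityMeasure P]

lemma ProbabilityTheory.IndepFun.integrable_left_of_integrable_add {X Y : Ω → ℝ}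
    (hXY : IndepFun X Y P) (hX : Measurable X) (hY : Measurable Y) (hint : Integrable (X + Y) P) :
    Integrable X P := by
  have : IsProbabilityMeasure (P.map Y) := Measure.isProbabilityMeasure_map hY.aemeasurable
  have hsum : Integrable (fun p : ℝ × ℝ => p.1 + p.2) ((P.map X).prod (P.map Y)) := by
    rw [← (indepFun_iff_map_prod_eq_prod_map_map hX.aemeasurable hY.aemeasurable).1 hXY,
      integrable_map_measure (by fun_prop) (hX.prodMk hY).aemeasurable]
    exact hint
  obtain ⟨y, hy⟩ := hsum.prod_left_ae.exists
  have hid : Integrable id (P.map X) := by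
    convert hy.sub (integrable_const y) using 1
    ext x
    simp
  exact (integrable_map_measure aestronglyMeasurable_id hX.aemeasurable).1 hid

lemma ProbabilityTheory.iIndepFun.integrable_of_integrable_sum {ι : Type*} [Fintype ι]
    {X : ι → Ω → ℝ} (hX : iIndepFun X P) (hmeas : ∀ i, Measurable (X i))
    (hsum : Integrable (∑ j, X j) P) (i : ι) : Integrable (X i) P := by
  classical
  refine (hX.indepFun_finsetSum_of_notMem hmeas (Finset.notMem_erase i Finset.univ)).symm
    |>.integrable_left_of_integrable_add (hmeas i) (by fun_prop) ?_
  rwa [Finset.add_sum_erase _ _ (Finset.mem_univ i)]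

lemma integrable_comp_of_integrable_sum_of_integrable_exp_neg {ι E : Type*} [Fintype ι]
    [MeasurableSpace E] {Q : Measure E} [IsProbabilityMeasure Q] {Y : ι → Ω → E}
    (hY : ∀ i, Measurable (Y i))
    {f : E → ℝ} (hf : Measurable f) (hexp : Integrable (fun x => Real.exp (-f x)) Q)
    (hac : ∀ i, P.map (Y i) ≪ Q) (hllr : ∀ i, Integrable (llr (P.map (Y i)) Q) (P.map (Y i)))
    (hsum : Integrable (fun ω => ∑ i, f (Y i ω)) P) (i : ι) :
    Integrable (fun ω => f (Y i ω)) P := by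
  refine integrable_of_integrable_sum_of_integrable_negPart
    (fun j => (hf.comp (hY j)).aestronglyMeasurable) hsum (fun j => ?_) i
  have : IsProbabilityMeasure (P.map (Y j)) := Measure.isProbabilityMeasure_map (hY j).aemeasurable
  exact (integrable_map_measure (hf.neg.max measurable_const).aestronglyMeasurable
    (hY j).aemeasurable).1 (integrable_negPart_of_integrable_exp_neg (hac j) (hllr j) hf hexp)

end Integrability

section CentralCondition

variable {α : Type*} [MeasurableSpace α]

def CentralConditionUpTo (Q : Measure α) (f : α → ℝ) (η c ε : ℝ) : Prop :=
  Real.log (∫ x, Real.exp (-η * f x) ∂Q) ≤ -c * η * (∫ x, f x ∂Q) + η * ε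

variable {P Q : Measure α} [IsProbabilityMeasure P] [IsProbabilityMeasure Q] {f : α → ℝ}

lemma CentralConditionUpTo.mul_integral_le {η c ε : ℝ} (hcc : CentralConditionUpTo Q f η c ε)
    (hη : 0 < η) (hPQ : P ≪ Q) (hllr : Integrable (llr P Q) P) (hfP : Integrable f P)
    (hexp : Integrable (fun x => Real.exp (-η * f x)) Q) :
    c * ∫ x, f x ∂Q ≤ ∫ x, f x ∂P + klDivR P Q / η + ε := by
  have hDV := integral_le_klDivR_add_log_integral_exp hPQ hllr (hfP.const_mul (-η)) hexp
  rw [integral_const_mul] at hDV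
  refine le_of_mul_le_mul_left ?_ hη
  rw [mul_add, mul_add, mul_div_cancel₀ _ hη.ne']
  unfold CentralConditionUpTo at hcc
  linarith

lemma rpow_one_div_two_sub_rpow_one_sub_mul_self {D β : ℝ} (hD : 0 < D) (hβ : β ≠ 2) :
    (D ^ (1 / (2 - β))) ^ (1 - β) * D ^ (1 / (2 - β)) = D := by
  have h2β : 2 - β ≠ 0 := sub_ne_zero.mpr hβ.symm
  rw [← Real.rpow_add_one (Real.rpow_pos_of_pos hD _).ne', ← Real.rpow_mul hD.le,
    one_div_mul_eq_div, show 1 - β + 1 = 2 - β by ring, div_self h2β, Real.rpow_one]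

lemma mul_integral_le_integral_add_two_mul_klDivR_rpow {β c : ℝ} (hβ : β ≠ 2)
    (hcentral : ∀ ε, 0 < ε → CentralConditionUpTo Q f (ε ^ (1 - β)) c ε)
    (hexp : ∀ η, 0 < η → Integrable (fun x => Real.exp (-η * f x)) Q)
    (hPQ : P ≪ Q) (hllr : Integrable (llr P Q) P) (hKL : 0 < klDivR P Q) (hfP : Integrable f P) :
    c * ∫ x, f x ∂Q ≤ ∫ x, f x ∂P + 2 * klDivR P Q ^ (1 / (2 - β)) := by
  set ε := klDivR P Q ^ (1 / (2 - β))
  have hε : 0 < ε := Real.rpow_pos_of_pos hKL _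
  have hη : 0 < ε ^ (1 - β) := Real.rpow_pos_of_pos hε _
  have hbound := (hcentral ε hε).mul_integral_le hη hPQ hllr hfP (hexp _ hη)
  -- `ε` is chosen so that the information term `klDivR P Q / η` equals the slack `ε`
  have hbalance : klDivR P Q / ε ^ (1 - β) = ε := by
    rw [div_eq_iff hη.ne', mul_comm]
    exact (rpow_one_div_two_sub_rpow_one_sub_mul_self hKL hβ).symm
  linarith

end CentralCondition

section LearningSetting

variable {Ω 𝒲 𝒵 : Type*} [MeasurableSpace Ω] [MeasurableSpace 𝒲] [MeasurableSpace 𝒵]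
  {P : Measure Ω} {μ : Measure 𝒵} {W : Ω → 𝒲} {n : ℕ} {Z : Fin n → Ω → 𝒵}

lemma integrable_inv_mul_sum_comp_and_integral_eq (hn : 0 < n) (hZ : ∀ i, Measurable (Z i))
    (hZlaw : ∀ i, P.map (Z i) = μ) {g : 𝒵 → ℝ} (hg : Integrable g μ) :
    Integrable (fun ω => (n : ℝ)⁻¹ * ∑ i, g (Z i ω)) P ∧
      ∫ ω, (n : ℝ)⁻¹ * ∑ i, g (Z i ω) ∂P = ∫ z, g z ∂μ := by
  have hgZ (i : Fin n) : Integrable (fun ω => g (Z i ω)) P := by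
    rw [← hZlaw i] at hg
    exact (integrable_map_measure hg.1 (hZ i).aemeasurable).1 hg
  have hgZ_int (i : Fin n) : ∫ ω, g (Z i ω) ∂P = ∫ z, g z ∂μ := by
    rw [← hZlaw i] at hg ⊢
    exact (integral_map (hZ i).aemeasurable hg.1).symm
  refine ⟨(integrable_finsetSum _ fun i _ => hgZ i).const_mul _, ?_⟩
  rw [integral_const_mul, integral_finsetSum _ fun i _ => hgZ i]
  simp only [hgZ_int, Finset.sum_const, Finset.card_univ, Fintype.card_fin, nsmul_eq_mul]
  field_simp

variable [IsProbabilityMeasure P] [IsProbabilityMeasure μ] {ℓ r : 𝒲 → 𝒵 → ℝ} {g : 𝒵 → ℝ}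

lemma integrable_of_integrable_generalizationError (hℓ : ∀ w z, ℓ w z = r w z + g z)
    (hg : Measurable g) (hn : 0 < n) (hW : Measurable W) (hZ : ∀ i, Measurable (Z i))
    (hZlaw : ∀ i, P.map (Z i) = μ) (hindep : iIndepFun Z P)
    (hrInt : Integrable (fun p : 𝒲 × 𝒵 => r p.1 p.2) ((P.map W).prod μ))
    (hgenInt : Integrable
      (fun ω => (∫ z, ℓ (W ω) z ∂μ) - (n : ℝ)⁻¹ * ∑ i, ℓ (W ω) (Z i ω)) P)
    (hEmpInt : Integrable (fun ω => (n : ℝ)⁻¹ * ∑ i, r (W ω) (Z i ω)) P) :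
    Integrable g μ := by
  by_contra hg_int
  -- for a.e. `w`, `ℓ w = r w + g` is then not integrable, so its integral is the junk value `0`
  have hL : ∀ᵐ ω ∂P, ∫ z, ℓ (W ω) z ∂μ = 0 :=
    ae_of_ae_map hW.aemeasurable <| hrInt.prod_right_ae.mono fun w hw =>
      integral_undef fun hℓw => hg_int <| by
        convert hℓw.sub hw using 1
        ext z
        simp [hℓ]
  have hsum : Integrable (fun ω => ∑ i, g (Z i ω)) P := by
    refine ((hgenInt.add hEmpInt).const_mul (-n)).congr (hL.mono fun ω hω => ?_)
    have : (n : ℝ) ≠ 0 := by positivity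
    simp only [Pi.add_apply, hω]
    simp only [hℓ, Finset.sum_add_distrib]
    field_simp
    ring
  have hgZ := (hindep.comp (fun _ => g) fun _ => hg).integrable_of_integrable_sum
    (fun i => hg.comp (hZ i)) (by simpa only [Finset.sum_fn, Function.comp_apply] using hsum)
    ⟨0, hn⟩
  rw [← hZlaw ⟨0, hn⟩] at hg_int
  exact hg_int ((integrable_map_measure hg.aestronglyMeasurable (hZ _).aemeasurable).2 hgZ)

lemma integral_generalizationError_eq (hℓ : ∀ w z, ℓ w z = r w z + g z) (hg : Integrable g μ)
    (hn : 0 < n) (hW : Measurable W) (hZ : ∀ i, Measurable (Z i))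
    (hZlaw : ∀ i, P.map (Z i) = μ)
    (hrInt : Integrable (fun p : 𝒲 × 𝒵 => r p.1 p.2) ((P.map W).prod μ))
    (hEmpInt : Integrable (fun ω => (n : ℝ)⁻¹ * ∑ i, r (W ω) (Z i ω)) P) :
    ∫ ω, ((∫ z, ℓ (W ω) z ∂μ) - (n : ℝ)⁻¹ * ∑ i, ℓ (W ω) (Z i ω)) ∂P
      = ∫ p, r p.1 p.2 ∂((P.map W).prod μ) - ∫ ω, (n : ℝ)⁻¹ * ∑ i, r (W ω) (Z i ω) ∂P := by
  have hR : Integrable (fun w => ∫ z, r w z ∂μ) (P.map W) := hrInt.integral_prod_left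
  have hRW : Integrable (fun ω => ∫ z, r (W ω) z ∂μ) P :=
    (integrable_map_measure hR.1 hW.aemeasurable).1 hR
  obtain ⟨hgZ, hgZ_int⟩ := integrable_inv_mul_sum_comp_and_integral_eq hn hZ hZlaw hg
  have hsplit : (fun ω => (∫ z, ℓ (W ω) z ∂μ) - (n : ℝ)⁻¹ * ∑ i, ℓ (W ω) (Z i ω))
      =ᵐ[P] fun ω => ((∫ z, r (W ω) z ∂μ) - (n : ℝ)⁻¹ * ∑ i, r (W ω) (Z i ω))
        + ((∫ z, g z ∂μ) - (n : ℝ)⁻¹ * ∑ i, g (Z i ω)) := by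
    filter_upwards [ae_of_ae_map hW.aemeasurable hrInt.prod_right_ae] with ω hω
    simp only [hℓ, integral_add hω hg, Finset.sum_add_distrib]
    ring
  have hRE : Integrable
      (fun ω => (∫ z, r (W ω) z ∂μ) - (n : ℝ)⁻¹ * ∑ i, r (W ω) (Z i ω)) P := hRW.sub hEmpInt
  have hG : Integrable (fun ω => (∫ z, g z ∂μ) - (n : ℝ)⁻¹ * ∑ i, g (Z i ω)) P :=
    (integrable_const _).sub hgZ
  rw [integral_congr_ae hsplit, integral_add hRE hG, integral_sub hRW hEmpInt,
    integral_sub (integrable_const _) hgZ, hgZ_int, integral_const,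
    ← integral_map hW.aemeasurable hR.1, integral_prod _ hrInt]
  simp

end LearningSetting

lemma sub_inv_mul_sum_le_of_forall_mul_le {n : ℕ} (hn : 0 < n) {A c : ℝ} (hc : 0 < c)
    {B e : Fin n → ℝ} (h : ∀ i, c * A ≤ B i + 2 * e i) :
    A - (n : ℝ)⁻¹ * ∑ i, B i ≤ (1 - c) / c * ((n : ℝ)⁻¹ * ∑ i, B i) + 2 / (n * c) * ∑ i, e i := by
  have hsum : ∑ _i : Fin n, c * A ≤ ∑ i, (B i + 2 * e i) := Finset.sum_le_sum fun i _ => h i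
  rw [Finset.sum_const, Finset.card_univ, Fintype.card_fin, nsmul_eq_mul, Finset.sum_add_distrib,
    ← Finset.mul_sum] at hsum
  have hn' : (0 : ℝ) < n := Nat.cast_pos.mpr hn
  have hgap : (1 - c) / c * ((n : ℝ)⁻¹ * ∑ i, B i) + 2 / (n * c) * ∑ i, e i
      - (A - (n : ℝ)⁻¹ * ∑ i, B i) = (∑ i, B i + 2 * ∑ i, e i - n * (c * A)) / (n * c) := by
    field_simp
    ring
  rw [← sub_nonneg, hgap]
  exact div_nonneg (by linarith) (by positivity)

theorem intermediate_rate_generalization_bound_general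
    {Ω 𝒲 𝒵 : Type*} [MeasurableSpace Ω] [MeasurableSpace 𝒲] [MeasurableSpace 𝒵]
    (P : Measure Ω) [IsProbabilityMeasure P]
    (μ : Measure 𝒵) [IsProbabilityMeasure μ]
    (ℓ : 𝒲 → 𝒵 → ℝ) (hℓ : Measurable (Function.uncurry ℓ))
    (n : ℕ) (hn : 0 < n)
    (Z : Fin n → Ω → 𝒵) (hZmeas : ∀ i, Measurable (Z i))
    (hZlaw : ∀ i, P.map (Z i) = μ)
    (hindep : iIndepFun Z P)
    (W : Ω → 𝒲) (hW : Measurable W)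
    (wstar : 𝒲)
    (r : 𝒲 → 𝒵 → ℝ) (hr : r = fun w z => ℓ w z - ℓ wstar z)
    (β c : ℝ) (hβ1 : β ≤ 1) (hc : 0 < c)
    -- all expectations appearing are finite
    (hrInt : Integrable (fun p : 𝒲 × 𝒵 => r p.1 p.2) ((P.map W).prod μ))
    (hexpInt : ∀ η' : ℝ, 0 < η' →
      Integrable (fun p : 𝒲 × 𝒵 => Real.exp (-η' * r p.1 p.2)) ((P.map W).prod μ))
    (hgenInt : Integrable
      (fun ω => (∫ z, ℓ (W ω) z ∂μ) - (n : ℝ)⁻¹ * ∑ i, ℓ (W ω) (Z i ω)) P)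
    (hEmpInt : Integrable (fun ω => (n : ℝ)⁻¹ * ∑ i, r (W ω) (Z i ω)) P)
    (hac : ∀ i, P.map (fun ω => (W ω, Z i ω)) ≪ (P.map W).prod μ)
    (hllr : ∀ i, Integrable (llr (P.map (fun ω => (W ω, Z i ω))) ((P.map W).prod μ))
        (P.map (fun ω => (W ω, Z i ω))))
    -- the `(ε^{1-β}, c)`-central condition up to `ε`, for all `ε > 0`
    (hcentral : ∀ ε : ℝ, 0 < ε →
      Real.log (∫ p, Real.exp (-(ε ^ ((1 : ℝ) - β)) * r p.1 p.2) ∂((P.map W).prod μ))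
        ≤ -c * ε ^ ((1 : ℝ) - β) * (∫ p, r p.1 p.2 ∂((P.map W).prod μ))
            + ε ^ ((1 : ℝ) - β) * ε)
    -- positive mutual information
    (hIpos : ∀ i, 0 < klDivR (P.map (fun ω => (W ω, Z i ω))) ((P.map W).prod μ)) :
    ∫ ω, ((∫ z, ℓ (W ω) z ∂μ) - (n : ℝ)⁻¹ * ∑ i, ℓ (W ω) (Z i ω)) ∂P
      ≤ (1 - c) / c * (∫ ω, (n : ℝ)⁻¹ * ∑ i, r (W ω) (Z i ω) ∂P)
        + (2 / (n * c)) * ∑ i,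
            (klDivR (P.map (fun ω => (W ω, Z i ω))) ((P.map W).prod μ)) ^ ((1 : ℝ) / (2 - β)) := by
  have : IsProbabilityMeasure (P.map W) := Measure.isProbabilityMeasure_map hW.aemeasurable
  have hℓ_split : ∀ w z, ℓ w z = r w z + ℓ wstar z := by subst hr; intros; ring
  have hℓstar : Measurable (ℓ wstar) := hℓ.comp (measurable_const.prodMk measurable_id)
  have hrmeas : Measurable fun p : 𝒲 × 𝒵 => r p.1 p.2 := by
    subst hr; exact hℓ.sub (hℓstar.comp measurable_snd)
  have hWZ (i : Fin n) : Measurable fun ω => (W ω, Z i ω) := hW.prodMk (hZmeas i)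
  have hsample (i : Fin n) : Integrable (fun ω => r (W ω) (Z i ω)) P := by
    refine integrable_comp_of_integrable_sum_of_integrable_exp_neg hWZ hrmeas
      (by simpa using hexpInt 1 one_pos) hac hllr ?_ i
    refine (hEmpInt.const_mul n).congr (.of_forall fun ω => ?_)
    field_simp [(Nat.cast_pos.mpr hn).ne']
  have hper (i : Fin n) : c * ∫ p, r p.1 p.2 ∂((P.map W).prod μ) ≤ ∫ ω, r (W ω) (Z i ω) ∂P
      + 2 * klDivR (P.map fun ω => (W ω, Z i ω)) ((P.map W).prod μ) ^ ((1 : ℝ) / (2 - β)) := by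
    have : IsProbabilityMeasure (P.map fun ω => (W ω, Z i ω)) :=
      Measure.isProbabilityMeasure_map (hWZ i).aemeasurable
    have hbound := mul_integral_le_integral_add_two_mul_klDivR_rpow (by linarith : β ≠ 2)
      hcentral hexpInt (hac i) (hllr i) (hIpos i)
      ((integrable_map_measure hrmeas.aestronglyMeasurable (hWZ i).aemeasurable).2 (hsample i))
    rwa [integral_map (hWZ i).aemeasurable hrmeas.aestronglyMeasurable] at hbound
  have hℓstar_int := integrable_of_integrable_generalizationError hℓ_split hℓstar hn hW hZmeas
    hZlaw hindep hrInt hgenInt hEmpInt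
  rw [integral_generalizationError_eq hℓ_split hℓstar_int hn hW hZmeas hZlaw hrInt hEmpInt,
    integral_const_mul, integral_finsetSum _ fun i _ => hsample i]
  exact sub_inv_mul_sum_le_of_forall_mul_le hn hc hper

/-- **Intermediate rate under the `(ε^{1-β}, c)`-central condition:** the generalization error
is bounded in terms of `I(W;Zᵢ)^{1/(2-β)}`. -/
theorem intermediate_rate_generalization_bound
    {Ω 𝒲 𝒵 : Type*} [MeasurableSpace Ω] [MeasurableSpace 𝒲] [MeasurableSpace 𝒵]
    (P : Measure Ω) [IsProbabilityMeasure P]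
    (μ : Measure 𝒵) [IsProbabilityMeasure μ]
    (ℓ : 𝒲 → 𝒵 → ℝ) (hℓ : Measurable (Function.uncurry ℓ))
    (n : ℕ) (hn : 0 < n)
    (Z : Fin n → Ω → 𝒵) (hZmeas : ∀ i, Measurable (Z i))
    (hZlaw : ∀ i, P.map (Z i) = μ)
    (hindep : iIndepFun Z P)
    (W : Ω → 𝒲) (hW : Measurable W)
    (wstar : 𝒲) (hwstar : ∀ w, ∫ z, ℓ wstar z ∂μ ≤ ∫ z, ℓ w z ∂μ)
    (r : 𝒲 → 𝒵 → ℝ) (hr : r = fun w z => ℓ w z - ℓ wstar z)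
    (β c : ℝ) (hβ0 : 0 ≤ β) (hβ1 : β ≤ 1) (hc : 0 < c) (hc1 : c < 1)
    -- all expectations appearing are finite
    (hrInt : Integrable (fun p : 𝒲 × 𝒵 => r p.1 p.2) ((P.map W).prod μ))
    (hexpInt : ∀ η' : ℝ, 0 < η' →
      Integrable (fun p : 𝒲 × 𝒵 => Real.exp (-η' * r p.1 p.2)) ((P.map W).prod μ))
    (hgenInt : Integrable
      (fun ω => (∫ z, ℓ (W ω) z ∂μ) - (n : ℝ)⁻¹ * ∑ i, ℓ (W ω) (Z i ω)) P)
    (hEmpInt : Integrable (fun ω => (n : ℝ)⁻¹ * ∑ i, r (W ω) (Z i ω)) P)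
    (hac : ∀ i, P.map (fun ω => (W ω, Z i ω)) ≪ (P.map W).prod μ)
    (hllr : ∀ i, Integrable (llr (P.map (fun ω => (W ω, Z i ω))) ((P.map W).prod μ))
        (P.map (fun ω => (W ω, Z i ω))))
    -- the `(ε^{1-β}, c)`-central condition up to `ε`, for all `ε > 0`
    (hcentral : ∀ ε : ℝ, 0 < ε →
      Real.log (∫ p, Real.exp (-(ε ^ ((1 : ℝ) - β)) * r p.1 p.2) ∂((P.map W).prod μ))
        ≤ -c * ε ^ ((1 : ℝ) - β) * (∫ p, r p.1 p.2 ∂((P.map W).prod μ))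
            + ε ^ ((1 : ℝ) - β) * ε)
    -- positive mutual information
    (hIpos : ∀ i, 0 < klDivR (P.map (fun ω => (W ω, Z i ω))) ((P.map W).prod μ)) :
    ∫ ω, ((∫ z, ℓ (W ω) z ∂μ) - (n : ℝ)⁻¹ * ∑ i, ℓ (W ω) (Z i ω)) ∂P
      ≤ (1 - c) / c * (∫ ω, (n : ℝ)⁻¹ * ∑ i, r (W ω) (Z i ω) ∂P)
        + (2 / (n * c)) * ∑ i,
            (klDivR (P.map (fun ω => (W ω, Z i ω))) ((P.map W).prod μ)) ^ ((1 : ℝ) / (2 - β)) :=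
  intermediate_rate_generalization_bound_general P μ ℓ hℓ n hn Z hZmeas hZlaw hindep W hW wstar r hr
    β c hβ1 hc hrInt hexpInt hgenInt hEmpInt hac hllr hcentral hIpos
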